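/- For all natural numbers k, the double sum over pairs (s,t) with 0 ≤ s,t ≤ k and s+t even of C(k,s)·C(k,t)·[(s+t)! / (((s+t)/2)! · 2^{(s+t)/2})]·[(2k−s−t)! / ((k−(s+t)/2)! · 2^{k−(s+t)/2})] equals (2k)!/k!. -/

import Mathlib

/-!
For even `m = s + t` the summand is `C(k,s) C(k,t) · m! (2k-m)! / ((m/2)! (k-m/2)! 2^k)`, which
depends on `(s, t)` only through the binomials. Summing over `s + t = m` (Vandermonde) turns them
into `C(2k, m)`, and `C(2k, 2j) (2j)! (2k-2j)! = (2k)!` leaves `(2k)! / (k! 2^k) · C(k, j)`.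
Summing `C(k, j)` over `j` gives `2^k`.
-/

open Finset
open scoped Nat

theorem sum_choose_mul_choose_mul_add {R : Type*} [CommSemiring R] (a b : ℕ) (f : ℕ → R) :
    ∑ s ∈ range (a + 1), ∑ t ∈ range (b + 1), (a.choose s * b.choose t : R) * f (s + t) =
      ∑ m ∈ range (a + b + 1), ((a + b).choose m : R) * f m := by
  rw [← sum_product', ← sum_fiberwise_of_maps_to (g := fun p : ℕ × ℕ ↦ p.1 + p.2)
    (t := range (a + b + 1)) (fun p hp ↦ by simp only [mem_product, mem_range] at hp ⊢; omega)]
  refine sum_congr rfl fun m _ ↦ ?_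
  rw [Nat.add_choose_eq, Nat.cast_sum, sum_mul]
  -- pairs outside the box `s ≤ a, t ≤ b` contribute `0` since a binomial coefficient vanishes
  refine sum_subset_zero_on_sdiff (fun p hp ↦ ?_) (fun p hp ↦ ?_) (fun p hp ↦ ?_)
  · simp only [mem_filter] at hp
    exact HasAntidiagonal.mem_antidiagonal.2 hp.2
  · simp only [mem_sdiff, mem_filter, mem_product, mem_range,
      HasAntidiagonal.mem_antidiagonal] at hp
    rcases Nat.lt_or_ge a p.1 with ha | ha
    · simp [Nat.choose_eq_zero_of_lt ha]
    · simp [Nat.choose_eq_zero_of_lt (by omega : b < p.2)]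
  · simp only [mem_filter] at hp
    rw [hp.2, Nat.cast_mul]

theorem sum_range_two_mul_add_one_ite_even {M : Type*} [AddCommMonoid M] (n : ℕ)
    (g : ℕ → M) :
    ∑ m ∈ range (2 * n + 1), (if Even m then g m else 0) =
      ∑ j ∈ range (n + 1), g (2 * j) := by
  induction n with
  | zero => simp
  | succ n ih =>
    rw [show 2 * (n + 1) + 1 = 2 * n + 1 + 1 + 1 by ring, sum_range_succ, sum_range_succ, ih,
      sum_range_succ _ (n + 1), if_neg (by simp),
      if_pos ⟨n + 1, by ring⟩, show 2 * n + 1 + 1 = 2 * (n + 1) by ring, add_zero]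

theorem choose_two_mul_mul_div_mul_div {K : Type*} [Field K] [CharZero K] {j k : ℕ}
    (h : j ≤ k) :
    ((2 * k).choose (2 * j) : K) * ((2 * j)! / (j ! * 2 ^ j)) *
        ((2 * k - 2 * j)! / ((k - j)! * 2 ^ (k - j))) =
      (2 * k)! / (k ! * 2 ^ k) * k.choose j := by
  obtain ⟨i, rfl⟩ := Nat.exists_eq_add_of_le h
  rw [Nat.cast_choose K (by omega : 2 * j ≤ 2 * (j + i)), Nat.cast_choose K h,
    show 2 * (j + i) - 2 * j = 2 * i by omega, Nat.add_sub_cancel_left, pow_add]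
  field_simp [Nat.factorial_ne_zero]

open Finset in
/-- The dimension count for `End_{𝔰𝔬_p⊕𝔰𝔬_q}(V^{⊗k})`:
`Σ_{0≤s,t≤k, s+t even} C(k,s)·C(k,t)·[(s+t)!/(((s+t)/2)!·2^{(s+t)/2})]`
`·[(2k−s−t)!/((k−(s+t)/2)!·2^{k−(s+t)/2})] = (2k)!/k!` (computed in `ℚ`). -/
theorem so_endomorphism_dimension_sum (k : ℕ) :
    (∑ s ∈ range (k + 1), ∑ t ∈ range (k + 1),
      if Even (s + t) then
        (k.choose s : ℚ) * (k.choose t) *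
          ((Nat.factorial (s + t) : ℚ) /
            ((Nat.factorial ((s + t) / 2)) * 2 ^ ((s + t) / 2))) *
          ((Nat.factorial (2 * k - (s + t)) : ℚ) /
            ((Nat.factorial (k - (s + t) / 2)) * 2 ^ (k - (s + t) / 2)))
      else 0)
    = (Nat.factorial (2 * k) : ℚ) / Nat.factorial k := by
  set f : ℕ → ℚ := fun m ↦ if Even m then
    (m ! / ((m / 2)! * 2 ^ (m / 2))) * ((2 * k - m)! / ((k - m / 2)! * 2 ^ (k - m / 2))) else 0
  calc _ = ∑ s ∈ range (k + 1), ∑ t ∈ range (k + 1),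
          (k.choose s * k.choose t : ℚ) * f (s + t) := by
        refine sum_congr rfl fun s _ ↦ sum_congr rfl fun t _ ↦ ?_
        simp only [f, mul_ite, mul_zero, mul_assoc]
    _ = ∑ m ∈ range (2 * k + 1), ((2 * k).choose m : ℚ) * f m := by
        rw [sum_choose_mul_choose_mul_add, ← two_mul]
    _ = ∑ j ∈ range (k + 1), ((2 * k).choose (2 * j) : ℚ) * ((2 * j)! / (j ! * 2 ^ j)) *
          ((2 * k - 2 * j)! / ((k - j)! * 2 ^ (k - j))) := by
        simp only [f, mul_ite, mul_zero, sum_range_two_mul_add_one_ite_even,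
          Nat.mul_div_cancel_left _ two_pos, mul_assoc]
    _ = ∑ j ∈ range (k + 1), (2 * k)! / (k ! * 2 ^ k) * (k.choose j : ℚ) :=
        sum_congr rfl fun j hj ↦
          choose_two_mul_mul_div_mul_div (Nat.lt_succ_iff.1 (mem_range.1 hj))
    _ = _ := by
        rw [← mul_sum, ← Nat.cast_sum, Nat.sum_range_choose]
        push_cast
        field_simp
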